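/- arXiv:2404.03864 — 2 statements merged into one kernel-verified Lean document; each statement's English description precedes it below -/
import Mathlib

section
/- For 0 < λ ≤ 1, the range of the map (φ₁, φ₃) ↦ e^{iφ₁} + e^{iφ₃} + λ e^{i(φ₁+φ₃)} on ℝ² is a simply connected subset of ℂ. -/
/-!
Writing a point of the range as `u + v (1 + λ u)` with `|u| = |v| = 1`, a point `z` lies in it iff
some unit `u` has `|z - u| = |1 + λ u|`, i.e. `Re ((z + λ) ū) = (|z|² - λ²) / 2`. As `u` runs over
the circle the left side sweeps out `[-|z + λ|, |z + λ|]`, so the range is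
`{z : ||z|² - λ²| ≤ 2 |z + λ|}`. For `λ ≤ 1` the lower half of this inequality always holds, and
the upper half survives shrinking `z` towards `0`. So the range is star-shaped about `0`, hence
contractible.
-/

open Complex ComplexConjugate

def szegoRange (lam : ℝ) : Set ℂ :=
  Set.range fun p : ℝ × ℝ => exp (I * p.1) + exp (I * p.2) + (lam : ℂ) * exp (I * (p.1 + p.2))

theorem mem_szegoRange_iff_exists_norm_eq_one {lam : ℝ} {z : ℂ} :
    z ∈ szegoRange lam ↔ ∃ u v : ℂ, ‖u‖ = 1 ∧ ‖v‖ = 1 ∧ z = u + v + lam * u * v := by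
  simp only [norm_eq_one_iff]
  constructor
  · rintro ⟨⟨φ, ψ⟩, rfl⟩
    refine ⟨_, _, ⟨φ, rfl⟩, ⟨ψ, rfl⟩, ?_⟩
    simp only [mul_add, exp_add]
    ring_nf
  · rintro ⟨_, _, ⟨φ, rfl⟩, ⟨ψ, rfl⟩, rfl⟩
    refine ⟨(φ, ψ), ?_⟩
    simp only [mul_add, exp_add]
    ring_nf

theorem exists_norm_eq_one_eq_add_mul_iff {z a b : ℂ} :
    (∃ v : ℂ, ‖v‖ = 1 ∧ z = a + v * b) ↔ ‖z - a‖ = ‖b‖ := by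
  constructor
  · rintro ⟨v, hv, rfl⟩
    simp [hv]
  · intro h
    rcases eq_or_ne b 0 with rfl | hb
    · exact ⟨1, by simp, by simpa [sub_eq_zero] using h⟩
    · refine ⟨(z - a) / b, by rw [norm_div, h, div_self (norm_ne_zero_iff.2 hb)], ?_⟩
      rw [div_mul_cancel₀ _ hb]
      ring

theorem norm_sub_eq_norm_one_add_mul_iff {lam : ℝ} {z u : ℂ} (hu : ‖u‖ = 1) :
    ‖z - u‖ = ‖1 + lam * u‖ ↔ ((z + lam) * conj u).re = (‖z‖ ^ 2 - lam ^ 2) / 2 := by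
  have hnu : normSq u = 1 := by rw [← Complex.sq_norm, hu, one_pow]
  rw [← sq_eq_sq₀ (norm_nonneg _) (norm_nonneg _), Complex.sq_norm, Complex.sq_norm,
    Complex.sq_norm, normSq_sub, normSq_add, normSq_mul, normSq_ofReal, hnu]
  simp only [mul_re, add_re, add_im, conj_re, conj_im, ofReal_re, ofReal_im, one_re, one_im,
    map_one]
  constructor <;> intro h <;> linarith

theorem exists_norm_eq_one_re_mul_conj_eq_iff {w : ℂ} {c : ℝ} :
    (∃ u : ℂ, ‖u‖ = 1 ∧ (w * conj u).re = c) ↔ |c| ≤ ‖w‖ := by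
  constructor
  · rintro ⟨u, hu, rfl⟩
    simpa [hu] using abs_re_le_norm (w * conj u)
  · intro hc
    set a := exp (arg w * I)
    have ha : ‖a‖ = 1 := norm_exp_ofReal_mul_I _
    have hwa : (w * conj a).re = ‖w‖ := by
      nth_rewrite 1 [← norm_mul_exp_arg_mul_I w]
      rw [mul_assoc, mul_conj, normSq_eq_norm_sq, ha, one_pow, ofReal_one, mul_one, ofReal_re]
    have hsphere : IsPreconnected (Metric.sphere (0 : ℂ) 1) :=
      isPreconnected_sphere (by simp [rank_real_complex]) 0 1
    obtain ⟨u, hu, hcu⟩ := hsphere.intermediate_value (a := -a) (b := a)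
      (by simpa using ha) (by simpa using ha) (f := fun u => (w * conj u).re) (by fun_prop)
      (show c ∈ Set.Icc _ _ by simpa [hwa] using abs_le.1 hc)
    exact ⟨u, by simpa using hu, hcu⟩

theorem mem_szegoRange_iff {lam : ℝ} {z : ℂ} :
    z ∈ szegoRange lam ↔ |‖z‖ ^ 2 - lam ^ 2| ≤ 2 * ‖z + lam‖ := by
  have hz : ∀ u v : ℂ, u + v + lam * u * v = u + v * (1 + lam * u) := fun u v => by ring
  simp only [mem_szegoRange_iff_exists_norm_eq_one, hz]
  calc (∃ u v : ℂ, ‖u‖ = 1 ∧ ‖v‖ = 1 ∧ z = u + v * (1 + lam * u))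
      ↔ ∃ u : ℂ, ‖u‖ = 1 ∧ ‖z - u‖ = ‖1 + lam * u‖ := by
        simp only [← exists_norm_eq_one_eq_add_mul_iff, exists_and_left]
    _ ↔ ∃ u : ℂ, ‖u‖ = 1 ∧ ((z + lam) * conj u).re = (‖z‖ ^ 2 - lam ^ 2) / 2 :=
        exists_congr fun u => and_congr_right norm_sub_eq_norm_one_add_mul_iff
    _ ↔ |‖z‖ ^ 2 - lam ^ 2| ≤ 2 * ‖z + lam‖ := by
        rw [exists_norm_eq_one_re_mul_conj_eq_iff, abs_div, abs_two, div_le_iff₀' two_pos]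

theorem sq_sub_sq_norm_le {lam : ℝ} (h0 : 0 ≤ lam) (h1 : lam ≤ 1) (z : ℂ) :
    lam ^ 2 - ‖z‖ ^ 2 ≤ 2 * ‖z + lam‖ := by
  have : lam - ‖z‖ ≤ ‖z + lam‖ := by
    simpa [abs_of_nonneg h0, add_comm] using norm_sub_norm_le (lam : ℂ) (-z)
  rcases le_total lam ‖z‖ with hz | hz
  · nlinarith [norm_nonneg (z + lam)]
  · nlinarith [mul_le_mul_of_nonneg_left (show lam + ‖z‖ ≤ 2 by linarith) (sub_nonneg.2 hz)]

theorem mem_szegoRange_iff_of_le_one {lam : ℝ} (h0 : 0 ≤ lam) (h1 : lam ≤ 1) {z : ℂ} :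
    z ∈ szegoRange lam ↔ ‖z‖ ^ 2 - lam ^ 2 ≤ 2 * ‖z + lam‖ := by
  rw [mem_szegoRange_iff, abs_le, neg_le, neg_sub]
  exact and_iff_right (sq_sub_sq_norm_le h0 h1 z)

theorem sq_norm_smul_sub_sq_le {lam t : ℝ} (h0 : 0 ≤ lam) (h1 : lam ≤ 1) (ht0 : 0 ≤ t) (ht1 : t ≤ 1)
    {z : ℂ} (hz : ‖z‖ ^ 2 - lam ^ 2 ≤ 2 * ‖z + lam‖) :
    ‖t • z‖ ^ 2 - lam ^ 2 ≤ 2 * ‖t • z + lam‖ := by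
  have hnorm : ‖t • z‖ = t * ‖z‖ := by rw [norm_smul, Real.norm_of_nonneg ht0]
  have hlam : ‖(lam : ℂ)‖ = lam := by simp [abs_of_nonneg h0]
  have hA : t * ‖z‖ - lam ≤ ‖t • z + lam‖ := by
    simpa only [hnorm, hlam, norm_neg, sub_neg_eq_add] using norm_sub_norm_le (t • z) (-(lam : ℂ))
  have hB : t * ‖z + lam‖ - (1 - t) * lam ≤ ‖t • z + lam‖ := by
    have key : t • z + lam = t • (z + lam) + (1 - t) • (lam : ℂ) := by
      simp only [smul_add, sub_smul, one_smul]; abel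
    have := norm_sub_norm_le (t • (z + lam)) (-((1 - t) • (lam : ℂ)))
    rwa [sub_neg_eq_add, ← key, norm_neg, norm_smul, norm_smul, hlam, Real.norm_of_nonneg ht0,
      Real.norm_of_nonneg (by linarith)] at this
  rw [hnorm]
  -- For small `t‖z‖` factor the difference of squares; otherwise scale the bound for `z` by `t`.
  rcases le_total (t * ‖z‖ + lam) 2 with hsmall | hlarge
  · rcases le_total (t * ‖z‖) lam with hle | hge
    · nlinarith [norm_nonneg (t • z + lam), pow_le_pow_left₀ (by positivity) hle 2]
    · nlinarith [mul_le_mul_of_nonneg_left hsmall (sub_nonneg.2 hge)]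
  · have hr : 2 * lam - lam ^ 2 ≤ t * ‖z‖ ^ 2 := by
      nlinarith [mul_nonneg (mul_nonneg ht0 (sub_nonneg.2 ht1)) (sq_nonneg ‖z‖),
        pow_le_pow_left₀ (by linarith) (show 2 - lam ≤ t * ‖z‖ by linarith) 2,
        mul_nonneg (sub_nonneg.2 h1) (by linarith : (0 : ℝ) ≤ 2 - lam)]
    nlinarith [mul_nonneg (sub_nonneg.2 ht1) (sub_nonneg.2 hr)]

theorem starConvex_szegoRange {lam : ℝ} (h0 : 0 ≤ lam) (h1 : lam ≤ 1) :
    StarConvex ℝ 0 (szegoRange lam) := by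
  intro z hz _ t _ ht hat
  rw [smul_zero, zero_add, mem_szegoRange_iff_of_le_one h0 h1]
  rw [mem_szegoRange_iff_of_le_one h0 h1] at hz
  exact sq_norm_smul_sub_sq_le h0 h1 ht (by linarith) hz

/-- For 0 < λ ≤ 1, the range of (φ₁, φ₃) ↦ e^{iφ₁} + e^{iφ₃} + λ e^{i(φ₁+φ₃)}
is a simply connected subset of ℂ. -/
theorem szego_range_simply_connected (lam : ℝ) (hlam : 0 < lam) (hlam1 : lam ≤ 1) :
    SimplyConnectedSpace
      ↥(Set.range (fun p : ℝ × ℝ => Complex.exp (I * p.1) + Complex.exp (I * p.2)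
          + (lam : ℂ) * Complex.exp (I * (p.1 + p.2)))) := by
  show SimplyConnectedSpace (szegoRange lam)
  have hmem : (0 : ℂ) ∈ szegoRange lam :=
    (mem_szegoRange_iff_of_le_one hlam.le hlam1).2 (by simp [abs_of_pos hlam]; nlinarith)
  have := (starConvex_szegoRange hlam.le hlam1).contractibleSpace ⟨0, hmem⟩
  exact SimplyConnectedSpace.ofContractible _
end

section
/- Fix a₁, a₂, a₃ > 0. Given a real matrix [[p, q],[r, s]] with determinant 1 and s ≠ 0, the values t₁ = −(r + a₁a₃/a₂)/s, t₂ = −a₁a₂ s / a₃, t₃ = (a₃² q − a₂a₃/a₁)/s are the unique real numbers such that A₃A₂A₁ = [[p, q],[r, s]], where A_j = (1/a_j)·[[t_j, -1],[a_j², 0]]. -/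
/-!
Multiplying out, `A₃A₂A₁ = (a₁a₂a₃)⁻¹ • [[t₃(t₂t₁ - a₁²) - a₂²t₁, a₂² - t₃t₂], [a₃²(t₂t₁ - a₁²), -a₃²t₂]]`.
The `(2,2)` entry fixes `t₂`, which is nonzero because `s ≠ 0`; the `(2,1)` and `(1,2)` entries are
then linear in `t₁` and `t₃` with coefficient `t₂`. The determinant condition makes the `(1,1)`
entry hold automatically.
-/

open Matrix

noncomputable def jacobiMatrix (a t : ℝ) : Matrix (Fin 2) (Fin 2) ℝ := (1 / a) • !![t, -1; a ^ 2, 0]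

theorem jacobiMatrix_mul_mul (a₁ a₂ a₃ t₁ t₂ t₃ : ℝ) :
    jacobiMatrix a₃ t₃ * jacobiMatrix a₂ t₂ * jacobiMatrix a₁ t₁ =
      (a₁ * a₂ * a₃)⁻¹ • !![t₃ * (t₂ * t₁ - a₁ ^ 2) - a₂ ^ 2 * t₁, a₂ ^ 2 - t₃ * t₂;
        a₃ ^ 2 * (t₂ * t₁ - a₁ ^ 2), -(a₃ ^ 2 * t₂)] := by
  simp only [jacobiMatrix, smul_mul_smul_comm, mul_fin_two]
  congr 1
  · field_simp
  · ext i j; fin_cases i <;> fin_cases j <;> simp <;> ring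

theorem jacobiMatrix_mul_mul_eq_iff {a₁ a₂ a₃ : ℝ} (h₁ : a₁ ≠ 0) (h₂ : a₂ ≠ 0) (h₃ : a₃ ≠ 0)
    (t₁ t₂ t₃ p q r s : ℝ) :
    jacobiMatrix a₃ t₃ * jacobiMatrix a₂ t₂ * jacobiMatrix a₁ t₁ = !![p, q; r, s] ↔
      t₃ * (t₂ * t₁ - a₁ ^ 2) - a₂ ^ 2 * t₁ = a₁ * a₂ * a₃ * p ∧
      a₂ ^ 2 - t₃ * t₂ = a₁ * a₂ * a₃ * q ∧
      a₃ ^ 2 * (t₂ * t₁ - a₁ ^ 2) = a₁ * a₂ * a₃ * r ∧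
      -(a₃ ^ 2 * t₂) = a₁ * a₂ * a₃ * s := by
  rw [jacobiMatrix_mul_mul, inv_smul_eq_iff₀ (by positivity), ← Matrix.ext_iff]
  simp [Fin.forall_fin_two, and_assoc]

/-- Given a₁,a₂,a₃ > 0 and an SL(2,ℝ) matrix [[p,q],[r,s]] with s ≠ 0, the
stated values t₁, t₂, t₃ are the unique real numbers with A₃A₂A₁ = [[p,q],[r,s]],
where A_j = (1/a_j)·[[t_j, -1],[a_j², 0]]. -/
theorem jacobi_triple_product_unique_solution (a₁ a₂ a₃ p q r s : ℝ)
    (ha₁ : 0 < a₁) (ha₂ : 0 < a₂) (ha₃ : 0 < a₃)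
    (hdet : p * s - q * r = 1) (hs : s ≠ 0)
    (A : ℝ → ℝ → Matrix (Fin 2) (Fin 2) ℝ)
    (hA : ∀ a t, A a t = (1 / a) • !![t, -1; a ^ 2, 0]) :
    (A a₃ ((a₃ ^ 2 * q - a₂ * a₃ / a₁) / s) * A a₂ (-(a₁ * a₂ * s / a₃)) *
        A a₁ (-((r + a₁ * a₃ / a₂) / s)) = !![p, q; r, s]) ∧
    ∀ t₁ t₂ t₃ : ℝ, A a₃ t₃ * A a₂ t₂ * A a₁ t₁ = !![p, q; r, s] →
      t₁ = -((r + a₁ * a₃ / a₂) / s) ∧ t₂ = -(a₁ * a₂ * s / a₃) ∧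
        t₃ = (a₃ ^ 2 * q - a₂ * a₃ / a₁) / s := by
  obtain rfl : A = jacobiMatrix := funext fun a => funext (hA a)
  have h₁ := ha₁.ne'
  have h₂ := ha₂.ne'
  have h₃ := ha₃.ne'
  simp only [jacobiMatrix_mul_mul_eq_iff h₁ h₂ h₃]
  refine ⟨⟨?_, ?_, ?_, ?_⟩, ?_⟩
  · field_simp
    linear_combination (-(a₁ * a₂ * a₃)) * hdet
  · field_simp
    ring
  · field_simp
    ring
  · field_simp
  · rintro t₁ t₂ t₃ ⟨-, hq, hr, hs'⟩
    have ht₂ : t₂ = -(a₁ * a₂ * s / a₃) := by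
      field_simp
      exact mul_left_cancel₀ h₃ (by linear_combination -hs')
    subst ht₂
    field_simp at hq hr
    refine ⟨?_, rfl, ?_⟩
    · field_simp
      linear_combination -hr
    · field_simp
      linear_combination hq
end
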